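/- arXiv:2410.06877 — 6 statements merged into one kernel-verified Lean document; each statement's English description precedes it below -/
import Mathlib

section
/- Given two additive agents and a set of indivisible goods M, suppose (A^1_1, A^1_2) is EFX under u_1 and (A^2_1, A^2_2) is EFX under u_2, with u_i(A^i_1) ≤ u_i(A^i_2) for each i, and suppose for each i ∈ {1,2}: u_i(A^i_2) − u_i(A^i_1) ≤ u_i(A^{3−i}_2) − u_i(A^{3−i}_1). Then the randomized allocation that with probability 1/2 realizes allocation A^1 (agent 2 picks her preferred bundle first, agent 1 gets the other) and with probability 1/2 realizes A^2 (agent 1 picks first) is ex-ante envy-free. -/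
/-- Given EFX bipartitions A^1 (under u₁) and A^2 (under u₂), ordered so that
u_i(A^i_1) ≤ u_i(A^i_2), satisfying the difference inequality
u_i(A^i_2) − u_i(A^i_1) ≤ u_i(A^{3−i}_2) − u_i(A^{3−i}_1), the half-half lottery over the
two realizations (the other agent picking her preferred bundle first) is ex-ante envy-free. -/
theorem stmt_1 {G : Type*} [DecidableEq G] [Fintype G]
    (u1 u2 : G → ℝ) (hu1 : ∀ g, 0 ≤ u1 g) (hu2 : ∀ g, 0 ≤ u2 g)
    (A1 B1 A2 B2 : Finset G)
    (hpart1 : A1 ∪ B1 = Finset.univ) (hdisj1 : Disjoint A1 B1)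
    (hpart2 : A2 ∪ B2 = Finset.univ) (hdisj2 : Disjoint A2 B2)
    (ho1 : ∑ g ∈ A1, u1 g ≤ ∑ g ∈ B1, u1 g)
    (ho2 : ∑ g ∈ A2, u2 g ≤ ∑ g ∈ B2, u2 g)
    -- A^1 is EFX under u₁, A^2 is EFX under u₂
    (hefx1 : ∀ g ∈ B1, (∑ x ∈ B1, u1 x) - u1 g ≤ ∑ x ∈ A1, u1 x)
    (hefx2 : ∀ g ∈ B2, (∑ x ∈ B2, u2 x) - u2 g ≤ ∑ x ∈ A2, u2 x)
    -- the difference inequalities, for i = 1 and i = 2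
    (hdiff1 : (∑ g ∈ B1, u1 g) - ∑ g ∈ A1, u1 g ≤ (∑ g ∈ B2, u1 g) - ∑ g ∈ A2, u1 g)
    (hdiff2 : (∑ g ∈ B2, u2 g) - ∑ g ∈ A2, u2 g ≤ (∑ g ∈ B1, u2 g) - ∑ g ∈ A1, u2 g)
    -- realization A^1: agent 2 gets Y1 (her preferred bundle), agent 1 gets X1
    (X1 Y1 : Finset G)
    (hr1 : (X1 = A1 ∧ Y1 = B1) ∨ (X1 = B1 ∧ Y1 = A1))
    (hpick1 : ∑ g ∈ X1, u2 g ≤ ∑ g ∈ Y1, u2 g)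
    -- realization A^2: agent 1 gets X2 (her preferred bundle), agent 2 gets Y2
    (X2 Y2 : Finset G)
    (hr2 : (X2 = A2 ∧ Y2 = B2) ∨ (X2 = B2 ∧ Y2 = A2))
    (hpick2 : ∑ g ∈ Y2, u1 g ≤ ∑ g ∈ X2, u1 g) :
    ((∑ g ∈ Y1, u1 g) + ∑ g ∈ Y2, u1 g) / 2 ≤ ((∑ g ∈ X1, u1 g) + ∑ g ∈ X2, u1 g) / 2 ∧
    ((∑ g ∈ X1, u2 g) + ∑ g ∈ X2, u2 g) / 2 ≤ ((∑ g ∈ Y1, u2 g) + ∑ g ∈ Y2, u2 g) / 2 := by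
  obtain ⟨hx1, hy1⟩ | ⟨hx1, hy1⟩ := hr1 <;>
    obtain ⟨hx2, hy2⟩ | ⟨hx2, hy2⟩ := hr2 <;>
      subst hx1 hy1 hx2 hy2 <;> constructor <;> linarith
end

section
/- For two agents with additive utilities over mixed goods M ∪ D (indivisible goods M and homogeneous divisible goods D), suppose (A, B) is a bipartition of M ∪ {d} (where d represents all of D merged into one good with u_i(d) = u_i(D)) such that the allocation is EFX under u_1 when agent 2 picks first, and the bundle received by agent 1 (say the lower-valued one under u_1) contains d. Then there exists α ∈ [0,1] such that transferring an α-fraction of d from the higher-valued bundle to the lower-valued bundle makes the two bundles equal in value under u_1, yielding (with agent 2 choosing first) an envy-free allocation of the mixed goods. -/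
/-- Mixed goods for two agents. Bundles L and H ∪ {d} with d divisible, where
u is agent 1's utility (u g for indivisible goods, ud for all of d), v agent 2's. If the
allocation is EFX under u and L is the lower-valued bundle under u, then some fraction
α ∈ [0,1] of d can be transferred so that the two bundles are equal under u, and letting
agent 2 pick her preferred bundle first yields an envy-free allocation of the mixed goods. -/
theorem stmt_3 {G : Type*} [DecidableEq G]
    (u v : G → ℝ) (hu : ∀ g, 0 ≤ u g) (hv : ∀ g, 0 ≤ v g)
    (ud vd : ℝ) (hud : 0 ≤ ud) (hvd : 0 ≤ vd)
    (L H : Finset G) (hdisj : Disjoint L H)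
    -- L is the lower-valued bundle under u; the higher bundle contains d
    (hlow : ∑ g ∈ L, u g ≤ (∑ g ∈ H, u g) + ud)
    -- EFX under u: removing d, or any indivisible good, from the higher bundle kills envy
    (hefxd : (∑ g ∈ H, u g) + ud - ud ≤ ∑ g ∈ L, u g)
    (hefx : ∀ g ∈ H, (∑ x ∈ H, u x) + ud - u g ≤ ∑ x ∈ L, u x) :
    ∃ α : ℝ, 0 ≤ α ∧ α ≤ 1 ∧
      ((∑ g ∈ L, u g) + α * ud = (∑ g ∈ H, u g) + (1 - α) * ud) ∧
      -- agent 2 picks her preferred bundle first and the allocation is envy-free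
      ((((∑ g ∈ L, v g) + α * vd ≤ (∑ g ∈ H, v g) + (1 - α) * vd) ∧
          ((∑ g ∈ H, u g) + (1 - α) * ud ≤ (∑ g ∈ L, u g) + α * ud)) ∨
       ((((∑ g ∈ H, v g) + (1 - α) * vd ≤ (∑ g ∈ L, v g) + α * vd)) ∧
          ((∑ g ∈ L, u g) + α * ud ≤ (∑ g ∈ H, u g) + (1 - α) * ud))) := by
  rcases eq_or_lt_of_le hud with h0 | h0
  · -- ud = 0
    refine ⟨0, le_refl 0, zero_le_one, by nlinarith, ?_⟩
    rcases le_total ((∑ g ∈ L, v g) + 0 * vd) ((∑ g ∈ H, v g) + (1 - 0) * vd) with h | h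
    · exact Or.inl ⟨h, by nlinarith⟩
    · exact Or.inr ⟨h, by nlinarith⟩
  · set a := ((∑ g ∈ H, u g) + ud - ∑ g ∈ L, u g) / (2 * ud) with ha
    have hud2 : (0:ℝ) < 2 * ud := by linarith
    have h1 : 0 ≤ a := div_nonneg (by linarith) (le_of_lt hud2)
    have h2 : a ≤ 1 := by
      rw [ha, div_le_one hud2]; linarith
    have heq : (∑ g ∈ L, u g) + a * ud = (∑ g ∈ H, u g) + (1 - a) * ud := by
      rw [ha]; field_simp; ring
    refine ⟨a, h1, h2, heq, ?_⟩
    rcases le_total ((∑ g ∈ L, v g) + a * vd) ((∑ g ∈ H, v g) + (1 - a) * vd) with h | h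
    · exact Or.inl ⟨h, le_of_eq heq.symm⟩
    · exact Or.inr ⟨h, le_of_eq heq⟩
end

section
/- Let (A_1, ..., A_n) be an EFM allocation of mixed goods M ∪ {d} under additive utility u_i of agent i, and let (B^i_1, ..., B^i_n) be a baseline allocation satisfying: every bundle B^i_j with divisible goods has value exactly x under u_i, every B^i_j has u_i(B^i_j) ≥ x, and for every subset 𝓘 of indices of bundles in the actual allocation that agent i envies, Σ_{j∈𝓘} u_i(A_j) ≤ Σ_{j=1}^{|𝓘|} u_i(B^i_j). Then u_i(A_i) ≥ x. That is, if agent i's bundle had value strictly less than x, summing values over all n bundles would yield u_i(M ∪ {d}) < u_i(M ∪ {d}), a contradiction. -/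
lemma card_filter_lt_fin (n k : ℕ) (h : k ≤ n) :
    (Finset.univ.filter (fun j : Fin n => (j : ℕ) < k)).card = k := by
  have hf : Finset.univ.filter (fun j : Fin n => (j : ℕ) < k)
      = (Finset.range k).attachFin (fun m hm => lt_of_lt_of_le (Finset.mem_range.mp hm) h) := by
    ext j; simp [Finset.mem_attachFin]
  rw [hf, Finset.card_attachFin, Finset.card_range]

/-- Baseline comparison. A j = u_i(A_j) are the bundle values of an EFM
allocation, B j = u_i(B^i_j) those of a baseline allocation, both partitioning M ∪ {d}
(so the totals agree). If every baseline bundle is worth at least x and every set of envied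
bundles is dominated by the corresponding prefix of baseline bundles, then u_i(A_i) ≥ x. -/
theorem stmt_5 (n : ℕ) (i : Fin n) (x : ℝ) (A B : Fin n → ℝ)
    (hsum : ∑ j, A j = ∑ j, B j)
    (hBx : ∀ j, x ≤ B j)
    (hprefix : ∀ I : Finset (Fin n), (∀ j ∈ I, A i < A j) →
      ∑ j ∈ I, A j ≤ ∑ j ∈ Finset.univ.filter (fun j : Fin n => (j : ℕ) < I.card), B j) :
    x ≤ A i := by
  by_contra h
  push_neg at h
  set I : Finset (Fin n) := Finset.univ.filter (fun j => A i < A j) with hIdef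
  set P : Finset (Fin n) := Finset.univ.filter (fun j : Fin n => (j : ℕ) < I.card) with hPdef
  have hImem : ∀ j, j ∈ I ↔ A i < A j := by intro j; simp [hIdef]
  have hIsum : ∑ j ∈ I, A j ≤ ∑ j ∈ P, B j :=
    hprefix I (fun j hj => (hImem j).mp hj)
  have hiI : i ∉ I := by simp [hImem]
  have hIcard : I.card ≤ n := by
    simpa using Finset.card_le_card (Finset.subset_univ I)
  have hPcard : P.card = I.card := card_filter_lt_fin n I.card hIcard
  have hIc : Iᶜ.card = n - I.card := by
    rw [Finset.card_compl, Fintype.card_fin]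
  have hPc : Pᶜ.card = n - I.card := by
    rw [Finset.card_compl, Fintype.card_fin, hPcard]
  -- complement bound
  have h1 : ∑ j ∈ Iᶜ, A j ≤ Iᶜ.card • A i := by
    apply Finset.sum_le_card_nsmul
    intro j hj
    have : ¬ A i < A j := by
      simpa [hImem] using (Finset.mem_compl.mp hj)
    linarith
  have hne : 0 < Iᶜ.card := Finset.card_pos.mpr ⟨i, Finset.mem_compl.mpr hiI⟩
  have h2 : Iᶜ.card • A i < Iᶜ.card • x := by
    simp only [nsmul_eq_mul]
    have : (0 : ℝ) < Iᶜ.card := by exact_mod_cast hne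
    nlinarith
  have h3 : (Pᶜ.card : ℕ) • x ≤ ∑ j ∈ Pᶜ, B j :=
    Finset.card_nsmul_le_sum _ _ _ (fun j _ => hBx j)
  have hcc : (Iᶜ.card : ℕ) • x = (Pᶜ.card : ℕ) • x := by rw [hIc, hPc]
  have hcomp : ∑ j ∈ Iᶜ, A j < ∑ j ∈ Pᶜ, B j := by
    calc ∑ j ∈ Iᶜ, A j ≤ Iᶜ.card • A i := h1
      _ < (Iᶜ.card : ℕ) • x := by simpa using h2
      _ = (Pᶜ.card : ℕ) • x := hcc
      _ ≤ ∑ j ∈ Pᶜ, B j := h3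
  have hA : ∑ j ∈ I, A j + ∑ j ∈ Iᶜ, A j = ∑ j, A j := Finset.sum_add_sum_compl I A
  have hB : ∑ j ∈ P, B j + ∑ j ∈ Pᶜ, B j = ∑ j, B j := Finset.sum_add_sum_compl P B
  linarith
end

section
/- For n agents with additive utilities and at most n indivisible goods plus divisible goods, consider the randomized allocation generated by running Round-Robin (each agent takes her most-valued remaining indivisible good) under a uniformly random agent order, followed by a water-filling phase producing an EFM allocation. Then this randomized allocation is ex-ante proportional: each agent's expected utility is at least u_i(M ∪ D)/n. -/
open Finset

def prevGoods {G : Type*} [DecidableEq G] {n : ℕ}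
    (B : Equiv.Perm (Fin n) → Fin n → Finset G) (π : Equiv.Perm (Fin n)) (k : Fin n) :
    Finset G :=
  (Finset.univ.filter (fun k' : Fin n => k' < k)).biUnion (fun k' => B π (π k'))

lemma fiber_card_perm {n : ℕ} (hn : 0 < n) (i k : Fin n) :
    ((univ : Finset (Equiv.Perm (Fin n))).filter (fun π => π k = i)).card
      = (n - 1).factorial := by
  classical
  have hall : ∀ i' : Fin n,
      ((univ : Finset (Equiv.Perm (Fin n))).filter (fun π => π k = i')).card =
      ((univ : Finset (Equiv.Perm (Fin n))).filter (fun π => π k = i)).card := by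
    intro i'
    apply Finset.card_bij (fun π _ => (Equiv.swap i' i) * π)
    · intro π hπ
      simp only [mem_filter, mem_univ, true_and] at hπ ⊢
      simp [Equiv.Perm.mul_apply, hπ]
    · intro π hπ π' hπ' h
      exact mul_left_cancel h
    · intro π hπ
      simp only [mem_filter, mem_univ, true_and] at hπ ⊢
      refine ⟨(Equiv.swap i' i) * π, ?_, ?_⟩
      · simp [Equiv.Perm.mul_apply, hπ]
      · rw [← mul_assoc, Equiv.swap_mul_self, one_mul]
  have hsum : ((univ : Finset (Equiv.Perm (Fin n)))).card
      = ∑ i' : Fin n,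
        ((univ : Finset (Equiv.Perm (Fin n))).filter (fun π => π k = i')).card :=
    Finset.card_eq_sum_card_fiberwise (fun π _ => mem_univ (π k))
  have hcardu : ((univ : Finset (Equiv.Perm (Fin n)))).card = n.factorial := by
    rw [Finset.card_univ, Fintype.card_perm, Fintype.card_fin]
  have hconst : ∑ i' : Fin n,
      ((univ : Finset (Equiv.Perm (Fin n))).filter (fun π => π k = i')).card
      = n * ((univ : Finset (Equiv.Perm (Fin n))).filter (fun π => π k = i)).card := by
    rw [Finset.sum_congr rfl (fun i' _ => hall i')]
    simp [Finset.sum_const, mul_comm]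
  have hfact : n.factorial = n * (n-1).factorial := by
    obtain ⟨n', rfl⟩ : ∃ n', n = n' + 1 := ⟨n - 1, by omega⟩
    simp [Nat.factorial_succ]
  have hkey : n * ((univ : Finset (Equiv.Perm (Fin n))).filter (fun π => π k = i)).card
      = n * (n-1).factorial := by
    rw [← hconst, ← hsum, hcardu, hfact]
  exact Nat.eq_of_mul_eq_mul_left hn hkey

/-- n agents, at most n indivisible goods and a divisible good. Run
Round-Robin (each agent takes a most-valued remaining good) under a uniformly random order
π, then water-filling, which may permute the bundles, never decreases an agent's value for
her own bundle, and yields an EFM allocation. The resulting randomized allocation is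
ex-ante proportional. -/
theorem stmt_15 {G : Type*} [Fintype G] [DecidableEq G] (n : ℕ) (hn : 0 < n)
    (hm : Fintype.card G ≤ n)
    (u : Fin n → G → ℝ) (hu : ∀ i g, 0 ≤ u i g)
    (ud : Fin n → ℝ) (hud : ∀ i, 0 ≤ ud i)
    -- Round-Robin bundles of indivisible goods under each order π
    (B : Equiv.Perm (Fin n) → Fin n → Finset G)
    (hBdisj : ∀ π, ∀ i j : Fin n, i ≠ j → Disjoint (B π i) (B π j))
    (hBcover : ∀ π, ∀ g : G, ∃ i, g ∈ B π i)
    -- greedy picks: the agent in position k takes a most-valued remaining good, if any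
    (hRR : ∀ (π : Equiv.Perm (Fin n)) (k : Fin n),
      ((∃ g : G, g ∉ prevGoods B π k) →
        ∃ g₀, g₀ ∉ prevGoods B π k ∧ B π (π k) = {g₀} ∧
          ∀ g' : G, g' ∉ prevGoods B π k → u (π k) g' ≤ u (π k) g₀) ∧
      ((∀ g : G, g ∈ prevGoods B π k) → B π (π k) = ∅))
    -- final allocation after water-filling: bundles C (a permutation of the Round-Robin
    -- bundles) plus fractions of the divisible good
    (C : Equiv.Perm (Fin n) → Fin n → Finset G)
    (frac : Equiv.Perm (Fin n) → Fin n → ℝ)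
    (hperm : ∀ π, ∃ ρ : Equiv.Perm (Fin n), ∀ i, C π i = B π (ρ i))
    (hfrac : ∀ π i, 0 ≤ frac π i) (hfsum : ∀ π, ∑ i, frac π i = 1)
    -- water-filling never decreases an agent's value for her own bundle
    (hmono : ∀ π i, ∑ g ∈ B π i, u i g ≤ (∑ g ∈ C π i, u i g) + frac π i * ud i)
    -- the final allocation is EFM
    (hEFM : ∀ π, ∀ i j : Fin n,
      (0 < frac π j →
        (∑ g ∈ C π j, u i g) + frac π j * ud i ≤ (∑ g ∈ C π i, u i g) + frac π i * ud i) ∧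
      (frac π j = 0 → (C π j).Nonempty →
        ∃ g ∈ C π j, (∑ x ∈ C π j, u i x) - u i g ≤ (∑ g ∈ C π i, u i g) + frac π i * ud i)) :
    -- ex-ante proportionality
    ∀ i : Fin n,
      ((∑ g : G, u i g) + ud i) / n ≤
        (∑ π : Equiv.Perm (Fin n), ((∑ g ∈ C π i, u i g) + frac π i * ud i)) /
          (Nat.factorial n : ℝ) := by
  classical
  intro i
  set own : Equiv.Perm (Fin n) → ℝ :=
    fun π => (∑ g ∈ C π i, u i g) + frac π i * ud i with own_def
  have hown_nonneg : ∀ π, 0 ≤ own π := fun π =>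
    add_nonneg (Finset.sum_nonneg fun g _ => hu i g) (mul_nonneg (hfrac π i) (hud i))
  -- Round-Robin bundles are singletons or empty
  have hBcard : ∀ (π : Equiv.Perm (Fin n)) (a : Fin n), (B π a).card ≤ 1 := by
    intro π a
    have ha : π (π.symm a) = a := π.apply_symm_apply a
    by_cases hex : ∃ g : G, g ∉ prevGoods B π (π.symm a)
    · obtain ⟨g₀, -, hB, -⟩ := (hRR π (π.symm a)).1 hex
      rw [ha] at hB
      simp [hB]
    · push_neg at hex
      have hB := (hRR π (π.symm a)).2 hex
      rw [ha] at hB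
      simp [hB]
  -- previously taken goods are few
  have hprev : ∀ (π : Equiv.Perm (Fin n)) (k : Fin n), (prevGoods B π k).card ≤ k.val := by
    intro π k
    refine le_trans Finset.card_biUnion_le ?_
    calc ∑ k' ∈ univ.filter (fun k' : Fin n => k' < k), (B π (π k')).card
        ≤ ∑ _k' ∈ univ.filter (fun k' : Fin n => k' < k), 1 :=
          Finset.sum_le_sum (fun k' _ => hBcard π (π k'))
      _ = (univ.filter (fun k' : Fin n => k' < k)).card := by simp
      _ = k.val := by
          have he : univ.filter (fun k' : Fin n => k' < k) = Finset.Iio k := by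
            ext j; simp
          rw [he, Fin.card_Iio]
  -- the minimizing permutation
  obtain ⟨π₀, -, hmin⟩ := Finset.exists_min_image (univ : Finset (Equiv.Perm (Fin n)))
    own ⟨1, mem_univ 1⟩
  set θ : ℝ := own π₀ with θ_def
  have hθ0 : 0 ≤ θ := hown_nonneg π₀
  -- structure of the bundles at π₀
  obtain ⟨ρ, hρ⟩ := hperm π₀
  have hCcard0 : ∀ j : Fin n, (C π₀ j).card ≤ 1 := fun j => by
    rw [hρ j]; exact hBcard π₀ _
  have hCdisj0 : ∀ j j' : Fin n, j ≠ j' → Disjoint (C π₀ j) (C π₀ j') := by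
    intro j j' hjj'
    rw [hρ j, hρ j']
    exact hBdisj π₀ _ _ (fun h => hjj' (ρ.injective h))
  have hCcover0 : ∀ g : G, ∃ j, g ∈ C π₀ j := by
    intro g
    obtain ⟨a, ha⟩ := hBcover π₀ g
    exact ⟨ρ.symm a, by rw [hρ, ρ.apply_symm_apply]; exact ha⟩
  set c : Fin n → ℝ := fun j => ∑ g ∈ C π₀ j, u i g with c_def
  set σ : Equiv.Perm (Fin n) := Tuple.sort c with σ_def
  have hd_mono : Monotone (c ∘ σ) := Tuple.monotone_sort c
  -- KEY 1 : at position k, the final value is at least the (k+1)-th largest bundle value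
  have key1 : ∀ (π : Equiv.Perm (Fin n)) (k : Fin n), π k = i →
      c (σ (Fin.rev k)) ≤ own π := by
    intro π k hki
    set w : ℝ := c (σ (Fin.rev k)) with w_def
    rcases le_or_gt w 0 with hw | hw
    · exact hw.trans (hown_nonneg π)
    · -- at least k+1 bundles at π₀ have value ≥ w
      set S : Finset (Fin n) := univ.filter (fun j : Fin n => w ≤ c j) with S_def
      have hcardS : k.val + 1 ≤ S.card := by
        have hsub : ∀ j ∈ Finset.Ici (Fin.rev k), σ j ∈ S := by
          intro j hj
          simp only [S_def, mem_filter, mem_univ, true_and]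
          exact hd_mono (Finset.mem_Ici.mp hj)
        have hinj := Finset.card_le_card_of_injOn σ hsub (σ.injective.injOn)
        rw [Fin.card_Ici] at hinj
        have hkn : k.val < n := k.isLt
        have hrev : (Fin.rev k).val = n - (k.val + 1) := Fin.val_rev k
        omega
      have hne : ∀ j ∈ S, (C π₀ j).Nonempty := by
        intro j hj
        simp only [S_def, mem_filter, mem_univ, true_and] at hj
        by_contra hemp
        rw [Finset.not_nonempty_iff_eq_empty] at hemp
        have : c j = 0 := by simp [c_def, hemp]
        rw [this] at hj
        exact absurd (lt_of_lt_of_le hw hj) (lt_irrefl 0)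
      set T : Finset G := S.biUnion (fun j => C π₀ j) with T_def
      have hTcard : k.val + 1 ≤ T.card := by
        rw [T_def, Finset.card_biUnion (fun j _ j' _ hjj' => hCdisj0 j j' hjj')]
        calc k.val + 1 ≤ S.card := hcardS
          _ = ∑ _j ∈ S, 1 := by simp
          _ ≤ ∑ j ∈ S, (C π₀ j).card :=
              Finset.sum_le_sum fun j hj => Finset.card_pos.mpr (hne j hj)
      have hTval : ∀ g ∈ T, w ≤ u i g := by
        intro g hg
        rw [T_def, Finset.mem_biUnion] at hg
        obtain ⟨j, hj, hgj⟩ := hg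
        have hsing : C π₀ j = {g} := by
          apply Finset.eq_singleton_iff_unique_mem.mpr
          exact ⟨hgj, fun g' hg' => Finset.card_le_one.mp (hCcard0 j) g' hg' g hgj⟩
        simp only [S_def, mem_filter, mem_univ, true_and] at hj
        have : c j = u i g := by simp [c_def, hsing]
        rwa [this] at hj
      -- some such good is still available at i's turn
      have hns : ¬ T ⊆ prevGoods B π k := by
        intro hsubset
        have := Finset.card_le_card hsubset
        have := hprev π k
        omega
      obtain ⟨g, hgT, hgnot⟩ := Finset.not_subset.mp hns
      obtain ⟨g₀, hg₀notin, hBeq, hmax⟩ := (hRR π k).1 ⟨g, hgnot⟩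
      have h1 : w ≤ u i g := hTval g hgT
      have h2 : u i g ≤ u i g₀ := by
        have := hmax g hgnot
        rwa [hki] at this
      have h3 : u i g₀ ≤ own π := by
        have hmn := hmono π i
        have hBi : B π i = {g₀} := by rw [← hki]; exact hBeq
        rw [hBi, Finset.sum_singleton] at hmn
        exact hmn
      linarith
  -- KEY 2 : the total value is at most the sum of water levels
  have hbi : (univ : Finset (Fin n)).biUnion (fun j => C π₀ j) = (univ : Finset G) := by
    ext g
    simp only [mem_biUnion, mem_univ, true_and, iff_true]
    exact hCcover0 g
  have hsum_c : ∑ j : Fin n, c j = ∑ g : G, u i g := by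
    have := Finset.sum_biUnion
      (f := fun g : G => u i g) (s := (univ : Finset (Fin n))) (t := fun j => C π₀ j)
      (fun j _ j' _ hjj' => hCdisj0 j j' hjj')
    rw [hbi] at this
    rw [← this]
  have hud_le : ud i ≤ ∑ j : Fin n, max (θ - c j) 0 := by
    have hud_eq : ud i = ∑ j : Fin n, frac π₀ j * ud i := by
      rw [← Finset.sum_mul, hfsum, one_mul]
    rw [hud_eq]
    refine Finset.sum_le_sum fun j _ => ?_
    rcases (hfrac π₀ j).lt_or_eq with hpos | hzero
    · have h := (hEFM π₀ i j).1 hpos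
      have h' : frac π₀ j * ud i ≤ θ - c j := by
        simp only [θ_def, own_def, c_def]
        linarith
      exact h'.trans (le_max_left _ _)
    · rw [← hzero, zero_mul]
      exact le_max_right _ _
  have key2 : (∑ g : G, u i g) + ud i ≤ ∑ j : Fin n, max (c j) θ := by
    have hpt : ∀ j : Fin n, max (c j) θ = c j + max (θ - c j) 0 := by
      intro j
      rcases le_total θ (c j) with h | h
      · rw [max_eq_left h, max_eq_right (by linarith : θ - c j ≤ 0), add_zero]
      · rw [max_eq_right h, max_eq_left (by linarith : (0:ℝ) ≤ θ - c j)]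
        ring
    calc (∑ g : G, u i g) + ud i
        ≤ (∑ j : Fin n, c j) + ∑ j : Fin n, max (θ - c j) 0 := by
          rw [hsum_c]; linarith
      _ = ∑ j : Fin n, max (c j) θ := by
          rw [← Finset.sum_add_distrib]
          exact (Finset.sum_congr rfl fun j _ => hpt j).symm
  -- KEY 3 : reindexing
  have key3 : ∑ k : Fin n, max (c (σ (Fin.rev k))) θ = ∑ j : Fin n, max (c j) θ := by
    have h1 : ∑ k : Fin n, max (c (σ (Fin.rev k))) θ
        = ∑ k : Fin n, max (c (σ k)) θ := by
      have := Equiv.sum_comp (Fin.revPerm : Equiv.Perm (Fin n))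
        (fun k => max (c (σ k)) θ)
      simpa using this
    rw [h1]
    exact Equiv.sum_comp σ (fun j => max (c j) θ)
  -- fiber decomposition
  have hfiber : ∑ k : Fin n, ∑ π ∈ univ.filter (fun π : Equiv.Perm (Fin n) => π k = i), own π
      = ∑ π : Equiv.Perm (Fin n), own π := by
    have hmt := Finset.sum_fiberwise_of_maps_to
      (fun (π : Equiv.Perm (Fin n)) (_ : π ∈ (univ : Finset (Equiv.Perm (Fin n)))) =>
        mem_univ (π.symm i)) own
    rw [← hmt]
    refine Finset.sum_congr rfl fun k _ => ?_
    congr 1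
    ext π
    simp only [mem_filter, mem_univ, true_and]
    constructor
    · intro h; rw [← h]; exact π.symm_apply_apply k
    · intro h; rw [← h]; exact π.apply_symm_apply i
  have hlow : ∀ k : Fin n, ((n-1).factorial : ℝ) * max (c (σ (Fin.rev k))) θ
      ≤ ∑ π ∈ univ.filter (fun π : Equiv.Perm (Fin n) => π k = i), own π := by
    intro k
    have hb : ∀ π ∈ univ.filter (fun π : Equiv.Perm (Fin n) => π k = i),
        max (c (σ (Fin.rev k))) θ ≤ own π := by
      intro π hπ
      simp only [mem_filter, mem_univ, true_and] at hπ
      exact max_le (key1 π k hπ) (hmin π (mem_univ π))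
    have := Finset.card_nsmul_le_sum
      (univ.filter (fun π : Equiv.Perm (Fin n) => π k = i)) own
      (max (c (σ (Fin.rev k))) θ) hb
    rw [fiber_card_perm hn i k] at this
    simpa [nsmul_eq_mul] using this
  have main : ((n-1).factorial : ℝ) * ((∑ g : G, u i g) + ud i)
      ≤ ∑ π : Equiv.Perm (Fin n), own π := by
    calc ((n-1).factorial : ℝ) * ((∑ g : G, u i g) + ud i)
        ≤ ((n-1).factorial : ℝ) * ∑ j : Fin n, max (c j) θ :=
          mul_le_mul_of_nonneg_left key2 (by positivity)
      _ = ∑ k : Fin n, ((n-1).factorial : ℝ) * max (c (σ (Fin.rev k))) θ := by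
          rw [← key3, Finset.mul_sum]
      _ ≤ ∑ k : Fin n, ∑ π ∈ univ.filter (fun π : Equiv.Perm (Fin n) => π k = i), own π :=
          Finset.sum_le_sum fun k _ => hlow k
      _ = ∑ π : Equiv.Perm (Fin n), own π := hfiber
  -- conclusion
  have hnR : (0:ℝ) < (n : ℝ) := by exact_mod_cast hn
  have hfR : (0:ℝ) < ((n.factorial : ℕ) : ℝ) := by exact_mod_cast n.factorial_pos
  rw [div_le_div_iff₀ hnR hfR]
  have hfacteq : ((n.factorial : ℕ) : ℝ) = (n : ℝ) * (((n-1).factorial : ℕ) : ℝ) := by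
    have h : n.factorial = n * (n-1).factorial := by
      obtain ⟨n', rfl⟩ : ∃ n', n = n' + 1 := ⟨n - 1, by omega⟩
      simp [Nat.factorial_succ]
    rw [h]; push_cast; ring
  calc ((∑ g : G, u i g) + ud i) * ((n.factorial : ℕ) : ℝ)
      = (n : ℝ) * (((n-1).factorial : ℕ) : ℝ) * ((∑ g : G, u i g) + ud i) := by
        rw [hfacteq]; ring
    _ ≤ (n : ℝ) * ∑ π : Equiv.Perm (Fin n), own π := by
        rw [mul_assoc]
        exact mul_le_mul_of_nonneg_left main (le_of_lt hnR)
    _ = (∑ π : Equiv.Perm (Fin n), own π) * (n : ℝ) := by ring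
end

section
/- For two agents with additive utilities over indivisible goods, an ex-ante envy-free and ex-post EFX randomized allocation always exists; moreover it can be taken to be supported on at most two integral allocations, namely a fair-coin lottery over an allocation A^1 that is EFX under u_1 and an allocation A^2 that is EFX under u_2, with each agent picking her preferred bundle in the allocation indexed by the other agent. -/
/-!
For each agent take a two-bundle partition minimising the imbalance `|u(X) - u(Xᶜ)|`, breaking ties
by the size of the heavier side: moving a good that witnesses an EFX violation out of the heavier
side would give a smaller imbalance, or the same imbalance with a smaller heavier side. In the
lottery, agent 1 loses at most her minimal imbalance `d₁` in the allocation built for her (the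
other agent chooses there) and gains the imbalance of the other agent's partition, which is at
least `d₁`, in the allocation where she chooses; symmetrically for agent 2. An agent who chooses
does not envy, hence is EFX.
-/

section

open Finset

variable {G : Type*}

/-- The owner of `A`, with utility `u`, does not envy `B` up to any good of `B`. -/
def EFXEnvyFree (u : G → ℝ) (A B : Finset G) : Prop :=
  ∀ g ∈ B, ∑ x ∈ B, u x - u g ≤ ∑ x ∈ A, u x

lemma EFXEnvyFree.of_sum_le {u : G → ℝ} (hu : ∀ g, 0 ≤ u g) {A B : Finset G}
    (h : ∑ x ∈ B, u x ≤ ∑ x ∈ A, u x) : EFXEnvyFree u A B :=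
  fun g _ => by linarith [hu g]

variable [Fintype G] [DecidableEq G]

def imbalance (u : G → ℝ) (X : Finset G) : ℝ := ∑ x ∈ X, u x - ∑ x ∈ Xᶜ, u x

lemma imbalance_compl (u : G → ℝ) (X : Finset G) : imbalance u Xᶜ = -imbalance u X := by
  simp only [imbalance, compl_compl, neg_sub]

lemma imbalance_erase (u : G → ℝ) {X : Finset G} {g : G} (hg : g ∈ X) :
    imbalance u (X.erase g) = imbalance u X - 2 * u g := by
  have hgc : g ∉ Xᶜ := by simpa using hg
  simp only [imbalance, compl_erase, sum_insert hgc, sum_erase_eq_sub hg]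
  ring

structure IsBalancedEFXSplit (u : G → ℝ) (X : Finset G) : Prop where
  abs_imbalance_le : ∀ Y, |imbalance u X| ≤ |imbalance u Y|
  efxEnvyFree : EFXEnvyFree u X Xᶜ
  efxEnvyFree_compl : EFXEnvyFree u Xᶜ X

lemma IsBalancedEFXSplit.compl {u : G → ℝ} {X : Finset G} (h : IsBalancedEFXSplit u X) :
    IsBalancedEFXSplit u Xᶜ where
  abs_imbalance_le Y := by simpa only [imbalance_compl, abs_neg] using h.abs_imbalance_le Y
  efxEnvyFree := by simpa only [compl_compl] using h.efxEnvyFree_compl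
  efxEnvyFree_compl := by simpa only [compl_compl] using h.efxEnvyFree

lemma exists_isBalancedEFXSplit {u : G → ℝ} (hu : ∀ g, 0 ≤ u g) :
    ∃ X, IsBalancedEFXSplit u X := by
  obtain ⟨X, hXS, hXmin⟩ := ({X | 0 ≤ imbalance u X} : Finset (Finset G)).exists_min_image
    (fun X => toLex (imbalance u X, #X))
    ⟨univ, by simpa [imbalance] using sum_nonneg fun g _ => hu g⟩
  simp only [mem_filter, mem_univ, true_and] at hXS hXmin
  have hX_le : ∀ Y, 0 ≤ imbalance u Y → imbalance u X ≤ imbalance u Y :=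
    fun Y hY => Prod.Lex.monotone_fst _ _ (hXmin Y hY)
  have hX_le_compl : ∀ Y, imbalance u Y ≤ 0 → imbalance u X ≤ -imbalance u Y := fun Y hY => by
    simpa only [imbalance_compl] using hX_le Yᶜ (by rw [imbalance_compl]; linarith)
  refine ⟨X, fun Y => ?_, .of_sum_le hu (by unfold imbalance at hXS; linarith), ?_⟩
  · rw [abs_of_nonneg hXS]
    rcases le_total 0 (imbalance u Y) with hY | hY
    · exact (hX_le Y hY).trans (le_abs_self _)
    · exact (hX_le_compl Y hY).trans (neg_le_abs _)
  · intro g hg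
    by_contra! hviol
    have hg_lt : u g < imbalance u X := by unfold imbalance; linarith
    have herase := imbalance_erase u hg
    rcases le_total 0 (imbalance u (X.erase g)) with hpos | hneg
    · -- `X.erase g` would have no larger imbalance and a smaller heavier side
      have hlt : toLex (imbalance u (X.erase g), #(X.erase g)) < toLex (imbalance u X, #X) :=
        Prod.Lex.toLex_strictMono (Prod.mk_lt_mk_of_le_of_lt (by linarith [hu g])
          (card_erase_lt_of_mem hg))
      exact (hXmin _ hpos).not_gt hlt
    · linarith [hX_le_compl _ hneg]

lemma exists_isBalancedEFXSplit_sum_le {u : G → ℝ} (hu : ∀ g, 0 ≤ u g) (v : G → ℝ) :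
    ∃ X, IsBalancedEFXSplit u X ∧ ∑ x ∈ X, v x ≤ ∑ x ∈ Xᶜ, v x := by
  obtain ⟨X, hX⟩ := exists_isBalancedEFXSplit hu
  rcases le_total (∑ x ∈ X, v x) (∑ x ∈ Xᶜ, v x) with h | h
  · exact ⟨X, hX, h⟩
  · exact ⟨Xᶜ, hX.compl, by rwa [compl_compl]⟩

lemma sum_compl_add_sum_le_of_abs_imbalance_le {u : G → ℝ} {X Y : Finset G}
    (hXY : |imbalance u X| ≤ |imbalance u Y|) (hY : ∑ x ∈ Y, u x ≤ ∑ x ∈ Yᶜ, u x) :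
    ∑ x ∈ Xᶜ, u x + ∑ x ∈ Y, u x ≤ ∑ x ∈ X, u x + ∑ x ∈ Yᶜ, u x := by
  have hYabs : |imbalance u Y| = ∑ x ∈ Yᶜ, u x - ∑ x ∈ Y, u x := by
    rw [imbalance, abs_of_nonpos (by linarith), neg_sub]
  have hX := (neg_le_abs (imbalance u X)).trans hXY
  rw [hYabs, imbalance] at hX
  linarith

end

/-- For two agents with additive utilities over indivisible goods there is a
randomized allocation, supported on two integral allocations A^1 = (A1, B1) and
A^2 = (A2, B2) realized with probability 1/2 each, such that A^1 is EFX under u₁, A^2 is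
EFX under u₂, in each realization A^i the other agent receives her preferred bundle
(agent 1 gets A1, A2; agent 2 gets B1, B2), every realized allocation is EFX for the
profile (u₁, u₂) (ex-post EFX), and the lottery is ex-ante envy-free. -/
theorem stmt_18 {G : Type*} [Fintype G] [DecidableEq G]
    (u1 u2 : G → ℝ) (h1 : ∀ g, 0 ≤ u1 g) (h2 : ∀ g, 0 ≤ u2 g) :
    ∃ A1 B1 A2 B2 : Finset G,
      Disjoint A1 B1 ∧ A1 ∪ B1 = Finset.univ ∧
      Disjoint A2 B2 ∧ A2 ∪ B2 = Finset.univ ∧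
      -- A^1 is EFX under u₁ and A^2 is EFX under u₂ (both directions)
      (∀ g ∈ B1, (∑ x ∈ B1, u1 x) - u1 g ≤ ∑ x ∈ A1, u1 x) ∧
      (∀ g ∈ A1, (∑ x ∈ A1, u1 x) - u1 g ≤ ∑ x ∈ B1, u1 x) ∧
      (∀ g ∈ B2, (∑ x ∈ B2, u2 x) - u2 g ≤ ∑ x ∈ A2, u2 x) ∧
      (∀ g ∈ A2, (∑ x ∈ A2, u2 x) - u2 g ≤ ∑ x ∈ B2, u2 x) ∧
      -- each agent picks her preferred bundle in the allocation indexed by the other agent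
      (∑ x ∈ A1, u2 x ≤ ∑ x ∈ B1, u2 x) ∧
      (∑ x ∈ B2, u1 x ≤ ∑ x ∈ A2, u1 x) ∧
      -- ex-post EFX for the profile (u₁, u₂) in both realizations
      (∀ g ∈ A1, (∑ x ∈ A1, u2 x) - u2 g ≤ ∑ x ∈ B1, u2 x) ∧
      (∀ g ∈ B2, (∑ x ∈ B2, u1 x) - u1 g ≤ ∑ x ∈ A2, u1 x) ∧
      -- ex-ante envy-freeness of the fair-coin lottery
      ((∑ x ∈ B1, u1 x) + ∑ x ∈ B2, u1 x) / 2 ≤ ((∑ x ∈ A1, u1 x) + ∑ x ∈ A2, u1 x) / 2 ∧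
      ((∑ x ∈ A1, u2 x) + ∑ x ∈ A2, u2 x) / 2 ≤ ((∑ x ∈ B1, u2 x) + ∑ x ∈ B2, u2 x) / 2 := by
  obtain ⟨P, hP, hPu2⟩ := exists_isBalancedEFXSplit_sum_le h1 u2
  obtain ⟨Q, hQ, hQu1⟩ := exists_isBalancedEFXSplit_sum_le h2 u1
  have hexante1 := sum_compl_add_sum_le_of_abs_imbalance_le (hP.abs_imbalance_le Q) hQu1
  have hexante2 := sum_compl_add_sum_le_of_abs_imbalance_le (hQ.abs_imbalance_le P) hPu2
  refine ⟨P, Pᶜ, Qᶜ, Q, disjoint_compl_right, Finset.union_compl P, disjoint_compl_left,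
    (Finset.union_comm _ _).trans (Finset.union_compl Q), hP.efxEnvyFree, hP.efxEnvyFree_compl, hQ.efxEnvyFree_compl,
    hQ.efxEnvyFree, hPu2, hQu1,
    EFXEnvyFree.of_sum_le h2 hPu2, EFXEnvyFree.of_sum_le h1 hQu1, ?_, ?_⟩
  · linarith
  · linarith
end

section
/- In the bi-valued setting with values {a, b}, 0 < a < b, suppose agent i, who belongs to a minimal unmatchable group and has received exactly one good of value a (to herself) plus earlier goods each of value b, compares her bundle with that of an agent j who was frozen: j's bundle contains at least one good of value a to agent i, and the extra value j accumulated during her freezing period is at most a + ⌊b/a − 1⌋·a + a. Then since b ≤ a·(⌊b/a − 1⌋ + 2) is equivalent to b ≤ a·⌊b/a⌋ + a, which always holds, removing one good of value a from j's bundle eliminates agent i's envy, i.e., the allocation is EFX between i and j. -/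
/-- Bi-valued EFX arithmetic for a never-frozen agent i vs a frozen agent j.
With common value c before the freezing episode, agent i accumulated at least
a + ⌊b/a − 1⌋·a + a during j's freezing period (including this round), while j's bundle
gained at most the large good b plus a small good a, the latter worth a to agent i.
Since b ≤ a·(⌊b/a − 1⌋ + 2) always holds, removing one good of value a from j's bundle
eliminates agent i's envy (EFX between i and j). -/
theorem stmt_19 (a b c uAi uAj : ℝ) (ha : 0 < a) (hab : a < b)
    (hi : c + a + (⌊b / a - 1⌋₊ : ℝ) * a + a ≤ uAi)
    (hj : uAj ≤ c + b + a) :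
    b ≤ a * ((⌊b / a - 1⌋₊ : ℝ) + 2) ∧ uAj - a ≤ uAi := by
  have hx : b / a - 1 - 1 < (⌊b / a - 1⌋₊ : ℝ) := Nat.sub_one_lt_floor _
  have hb : b ≤ a * ((⌊b / a - 1⌋₊ : ℝ) + 2) := by
    have h1 : b / a ≤ (⌊b / a - 1⌋₊ : ℝ) + 2 := by linarith
    calc b = a * (b / a) := by field_simp
    _ ≤ a * ((⌊b / a - 1⌋₊ : ℝ) + 2) := by nlinarith
  exact ⟨hb, by nlinarith⟩
end
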